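/- Let X = {x₁,...,x_m} be a unit-norm tight frame for R^n with coherence α, and suppose there is x ∈ X with |⟨x,y⟩| = α for every y ∈ X \ {x}. Then α = √((m-n)/(n(m-1))), i.e., α equals the Welch bound, and hence X is an equiangular tight frame. -/

import Mathlib

/-!
Testing the tight-frame identity `∑ᵢ ⟪xᵢ, v⟫ xᵢ = (m/n) v` against `v = xᵢ` gives, for every
frame vector, `∑_{j ≠ i} ⟪xᵢ, xⱼ⟫² = m/n - 1`. At the vector all of whose `m - 1` neighbours
have overlap `α`, this reads `(m - 1) α² = m/n - 1`, which is the Welch value. At any other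
vector the `m - 1` squared overlaps are each at most `α²` and still sum to `(m - 1) α²`, so each
equals `α²`.
-/

open scoped RealInnerProductSpace
abbrev E (n : ℕ) := EuclideanSpace ℝ (Fin n)
noncomputable def cohF {n m : ℕ} (x : Fin m → E n) : ℝ :=
  sSup {r : ℝ | ∃ i j : Fin m, i ≠ j ∧ r = |⟪x i, x j⟫|}

open Finset

section TightFrame

variable {F ι : Type*} [NormedAddCommGroup F] [InnerProductSpace ℝ F] [Fintype ι]

theorem sum_inner_sq_eq_of_frame_eq_smul {x : ι → F} {c : ℝ}
    (htight : ∀ v, ∑ i, ⟪x i, v⟫ • x i = c • v) (v : F) :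
    ∑ i, ⟪x i, v⟫ ^ 2 = c * ‖v‖ ^ 2 := by
  simpa [sum_inner, real_inner_smul_left, sq, real_inner_self_eq_norm_sq]
    using congrArg (⟪·, v⟫) (htight v)

theorem sum_erase_inner_sq_eq_of_frame_eq_smul [DecidableEq ι] {x : ι → F} {c : ℝ}
    (hunit : ∀ i, ‖x i‖ = 1) (htight : ∀ v, ∑ i, ⟪x i, v⟫ • x i = c • v) (i : ι) :
    ∑ j ∈ univ.erase i, ⟪x i, x j⟫ ^ 2 = c - 1 := by
  have h := sum_inner_sq_eq_of_frame_eq_smul htight (x i)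
  rw [← add_sum_erase _ _ (mem_univ i), real_inner_self_eq_norm_sq, hunit i] at h
  simp_rw [real_inner_comm _ (x i)]
  linarith

end TightFrame

theorem abs_eq_of_sum_sq_eq_card_mul_sq {ι : Type*} {s : Finset ι} {f : ι → ℝ} {a : ℝ}
    (ha : 0 ≤ a) (hle : ∀ j ∈ s, |f j| ≤ a) (hsum : ∑ j ∈ s, f j ^ 2 = #s * a ^ 2) :
    ∀ j ∈ s, |f j| = a := by
  have hsq : ∀ j ∈ s, f j ^ 2 ≤ a ^ 2 := fun j hj =>
    sq_le_sq.2 ((hle j hj).trans (le_abs_self a))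
  rw [← nsmul_eq_mul, ← sum_const] at hsum
  intro j hj
  have hj_sq := (sum_eq_sum_iff_of_le hsq).1 hsum j hj
  rw [sq_eq_sq_iff_abs_eq_abs, abs_of_nonneg ha] at hj_sq
  exact hj_sq

theorem abs_inner_le_cohF {n m : ℕ} (x : Fin m → E n) {i j : Fin m} (hij : i ≠ j) :
    |⟪x i, x j⟫| ≤ cohF x := by
  refine le_csSup (Set.Finite.bddAbove ?_) ⟨i, j, hij, rfl⟩
  refine (Set.finite_range fun p : Fin m × Fin m => |⟪x p.1, x p.2⟫|).subset ?_
  rintro _ ⟨a, b, -, rfl⟩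
  exact ⟨(a, b), rfl⟩

theorem welch_equality_of_full_neighbors {n m : ℕ} (hn : 0 < n) (hm : 1 < m)
    (x : Fin m → E n) (hunit : ∀ i, ‖x i‖ = 1)
    (htight : ∀ v : E n, ∑ i, ⟪x i, v⟫ • x i = ((m : ℝ) / n) • v)
    (α : ℝ) (hα : cohF x = α)
    (hfull : ∃ i : Fin m, ∀ j : Fin m, j ≠ i → |⟪x i, x j⟫| = α) :
    α = Real.sqrt (((m : ℝ) - n) / (n * ((m : ℝ) - 1))) ∧
    ∀ i j : Fin m, i ≠ j → |⟪x i, x j⟫| = α := by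
  obtain ⟨i₀, hi₀⟩ := hfull
  have hm' : (1 : ℝ) < m := by exact_mod_cast hm
  have hcard (i : Fin m) : (#(univ.erase i) : ℝ) = m - 1 := by
    rw [card_erase_of_mem (mem_univ i), card_univ, Fintype.card_fin, Nat.cast_pred (by omega)]
  have hoff := sum_erase_inner_sq_eq_of_frame_eq_smul hunit htight
  obtain ⟨j₀, hj₀⟩ := Fintype.exists_ne_of_one_lt_card (by simpa using hm) i₀
  have hα₀ : 0 ≤ α := hi₀ j₀ hj₀ ▸ abs_nonneg _
  have hα_sq : (m - 1) * α ^ 2 = m / n - 1 := by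
    rw [← hoff i₀, ← hcard i₀, ← nsmul_eq_mul, ← sum_const]
    exact sum_congr rfl fun j hj => by rw [← hi₀ j (ne_of_mem_erase hj), sq_abs]
  refine ⟨?_, fun i j hij => ?_⟩
  · have hn' : (n : ℝ) ≠ 0 := by positivity
    have hm₁ : (m : ℝ) - 1 ≠ 0 := by linarith
    rw [← Real.sqrt_sq hα₀]
    congr 1
    field_simp at hα_sq ⊢
    linarith
  · refine abs_eq_of_sum_sq_eq_card_mul_sq (f := fun k => ⟪x i, x k⟫) hα₀ (fun k hk => ?_) ?_ j
      (mem_erase.2 ⟨hij.symm, mem_univ j⟩)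
    · exact hα ▸ abs_inner_le_cohF x (ne_of_mem_erase hk).symm
    · rw [hoff i, hcard i, hα_sq]
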